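/- Let 𝒳 be the set of invertible 2×2 real matrices and define g : 𝒳 → ℝ by g(X) = |det X| / 2, the area of the triangle formed by the two columns of X and the origin. Let I be the family of transformations of 𝒳 consisting of: (i) X ↦ R_θ · X for each θ ∈ [0, π/4], where R_θ is the rotation matrix with rows (cos θ, −sin θ) and (sin θ, cos θ); (ii) X ↦ X · diag(a, a⁻¹) for each a ∈ [2/3, 3/2]; (iii) X ↦ X · diag(−1, 1); (iv) X ↦ X · S, where S is the shear matrix with rows (1, 1) and (0, 1); and (v) X ↦ X · (−I₂). Then I is a causal essential set for g: every transformation in I preserves |det| (hence preserves g and maps 𝒳 to 𝒳), and for any two invertible 2×2 real matrices X₁, X₂ with |det X₁| = |det X₂| there exist finitely many transformations T₁, …, T_K ∈ I such that (T₁ ∘ ⋯ ∘ T_K)(X₁) = X₂. -/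

import Mathlib

open Matrix

/-- A family `I` of transformations `T : X → X` is a causal essential set for `h` if
`h ∘ T = h` for every `T ∈ I`, and for all `x₁, x₂` with `h x₁ = h x₂` there are finitely
many `T₁, …, T_K ∈ I` such that `(T₁ ∘ ⋯ ∘ T_K) x₁ = x₂`. -/
def IsCausalEssentialSet {X V : Type*} (h : X → V) (I : Set (X → X)) : Prop :=
  (∀ T ∈ I, h ∘ T = h) ∧
    ∀ x₁ x₂ : X, h x₁ = h x₂ →
      ∃ l : List (X → X), (∀ T ∈ l, T ∈ I) ∧ l.foldr (· ∘ ·) id x₁ = x₂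

/-- The rotation matrix with angle `θ`. -/
noncomputable def rotM (θ : ℝ) : Matrix (Fin 2) (Fin 2) ℝ :=
  !![Real.cos θ, -Real.sin θ; Real.sin θ, Real.cos θ]

/-- The diagonal matrix `diag(p, q)`. -/
def diagM (p q : ℝ) : Matrix (Fin 2) (Fin 2) ℝ := !![p, 0; 0, q]

/-- The shear matrix with rows `(1, 1)` and `(0, 1)`. -/
def shearM : Matrix (Fin 2) (Fin 2) ℝ := !![1, 1; 0, 1]

/-!
Every invertible `X` factors as `R_θ * U` with `U` upper triangular: rotate the first column
of `X` onto the positive `x`-axis. Since `θ ↦ R_θ` is a homomorphism from `(ℝ, +)`, powers of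
rotations by angles in `[0, π/4]` give every rotation, and likewise powers of `diag(a, a⁻¹)`,
`a ∈ [2/3, 3/2]`, give `diag(t, t⁻¹)` for every `t > 0`. Conjugating `S` by these yields every
shear `[1, u; 0, 1]` with `u ≥ 0`, conjugating once more by the mirror gives `u < 0`, and the
mirror and `-I₂` give all four sign matrices; together they generate every upper triangular `U`
with `|det U| = 1`. So if `|det X₁| = |det X₂|` and `Xᵢ = R_{θᵢ} Uᵢ`, then
`X₂ = R_{θ₂ - θ₁} X₁ (U₁⁻¹ U₂)` is reached from `X₁`.
-/

open Relation

theorem exists_list_of_reflTransGen {X : Type*} {I : Set (X → X)} {x y : X}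
    (h : ReflTransGen (fun a b => ∃ T ∈ I, T a = b) x y) :
    ∃ l : List (X → X), (∀ T ∈ l, T ∈ I) ∧ l.foldr (· ∘ ·) id x = y := by
  induction h with
  | refl => exact ⟨[], by simp, rfl⟩
  | tail _ hstep ih =>
    obtain ⟨l, hl, rfl⟩ := ih
    obtain ⟨T, hT, rfl⟩ := hstep
    exact ⟨T :: l, by simpa [hT] using hl, rfl⟩

theorem exists_nat_abs_div_le {ε : ℝ} (hε : 0 < ε) (t : ℝ) :
    ∃ n : ℕ, n ≠ 0 ∧ |t / n| ≤ ε := by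
  obtain ⟨n, hn⟩ := exists_nat_gt (|t| / ε)
  have hn0 : (0 : ℝ) < n := (div_nonneg (abs_nonneg t) hε.le).trans_lt hn
  refine ⟨n, by exact_mod_cast hn0.ne', ?_⟩
  rw [abs_div, Nat.abs_cast, div_le_iff₀ hn0]
  rw [div_lt_iff₀ hε] at hn
  linarith

namespace AddChar

variable {M : Type*} [Monoid M] (ψ : AddChar ℝ M)

theorem apply_mem_closure_image_of_div_mem {S : Set ℝ} {t : ℝ} {n : ℕ} (hn : n ≠ 0)
    (h : t / n ∈ S) : ψ t ∈ Submonoid.closure (ψ '' S) := by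
  have : t = n • (t / n) := by rw [nsmul_eq_mul]; field_simp
  rw [this, map_nsmul_eq_pow]
  exact pow_mem (Submonoid.subset_closure (Set.mem_image_of_mem ψ h)) n

theorem apply_mem_closure_image_Icc_neg {ε : ℝ} (hε : 0 < ε) (t : ℝ) :
    ψ t ∈ Submonoid.closure (ψ '' Set.Icc (-ε) ε) := by
  obtain ⟨n, hn, h⟩ := exists_nat_abs_div_le hε t
  exact ψ.apply_mem_closure_image_of_div_mem hn (abs_le.mp h)

theorem apply_mem_closure_image_Icc_zero {ε : ℝ} (hε : 0 < ε) {t : ℝ} (ht : 0 ≤ t) :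
    ψ t ∈ Submonoid.closure (ψ '' Set.Icc 0 ε) := by
  obtain ⟨n, hn, h⟩ := exists_nat_abs_div_le hε t
  have ht' : 0 ≤ t / n := by positivity
  exact ψ.apply_mem_closure_image_of_div_mem hn ⟨ht', (le_abs_self _).trans h⟩

end AddChar

section MulStep

variable {n R : Type*} [Fintype n] [DecidableEq n] [CommRing R] (Lg Rg : Set (Matrix n n R))

def MulStep (x y : {A : Matrix n n R // A.det ≠ 0}) : Prop :=
  (∃ L ∈ Lg, y.val = L * x.val) ∨ ∃ M ∈ Rg, y.val = x.val * M

variable {Lg Rg}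

theorem reflTransGen_mulStep_of_left_mem_closure {L : Matrix n n R}
    (hL : L ∈ Submonoid.closure Lg) {x y : {A : Matrix n n R // A.det ≠ 0}}
    (h : y.val = L * x.val) : ReflTransGen (MulStep Lg Rg) x y := by
  induction hL using Submonoid.closure_induction generalizing x y with
  | mem L hL => exact .single (.inl ⟨L, hL, h⟩)
  | one => rw [Subtype.ext (h.trans (one_mul _))]
  | mul L₁ L₂ _ _ ih₁ ih₂ =>
    have hz : (L₂ * x.val).det ≠ 0 := by
      have := y.2
      rw [h, mul_assoc, det_mul] at this
      exact right_ne_zero_of_mul this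
    exact (ih₂ (y := ⟨_, hz⟩) rfl).trans (ih₁ (h.trans (mul_assoc _ _ _)))

theorem reflTransGen_mulStep_of_right_mem_closure {M : Matrix n n R}
    (hM : M ∈ Submonoid.closure Rg) {x y : {A : Matrix n n R // A.det ≠ 0}}
    (h : y.val = x.val * M) : ReflTransGen (MulStep Lg Rg) x y := by
  induction hM using Submonoid.closure_induction generalizing x y with
  | mem M hM => exact .single (.inr ⟨M, hM, h⟩)
  | one => rw [Subtype.ext (h.trans (mul_one _))]
  | mul M₁ M₂ _ _ ih₁ ih₂ =>
    have hz : (x.val * M₁).det ≠ 0 := by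
      have := y.2
      rw [h, ← mul_assoc, det_mul] at this
      exact left_ne_zero_of_mul this
    exact (ih₁ (y := ⟨_, hz⟩) rfl).trans (ih₂ (h.trans (mul_assoc _ _ _).symm))

theorem reflTransGen_mulStep_of_mem_closure {L M : Matrix n n R}
    (hL : L ∈ Submonoid.closure Lg) (hM : M ∈ Submonoid.closure Rg)
    {x y : {A : Matrix n n R // A.det ≠ 0}} (h : y.val = L * x.val * M) :
    ReflTransGen (MulStep Lg Rg) x y := by
  have hz : (L * x.val).det ≠ 0 := by
    have := y.2
    rw [h, det_mul] at this
    exact left_ne_zero_of_mul this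
  exact (reflTransGen_mulStep_of_left_mem_closure hL (y := ⟨_, hz⟩) rfl).trans
    (reflTransGen_mulStep_of_right_mem_closure hM h)

end MulStep

theorem det_rotM (θ : ℝ) : (rotM θ).det = 1 := by
  simp [rotM, det_fin_two_of, ← sq, Real.cos_sq_add_sin_sq]

theorem det_diagM (p q : ℝ) : (diagM p q).det = p * q := by
  simp [diagM, det_fin_two_of]

theorem det_shearM : shearM.det = 1 := by
  simp [shearM, det_fin_two_of]

theorem diagM_mul_diagM (a b c d : ℝ) : diagM a b * diagM c d = diagM (a * c) (b * d) := by
  simp [diagM]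

theorem diagM_one_one : diagM 1 1 = 1 := by
  simp [diagM, one_fin_two]

theorem rotM_add (a b : ℝ) : rotM (a + b) = rotM a * rotM b := by
  ext i j
  fin_cases i <;> fin_cases j <;> simp [rotM, mul_apply, Real.cos_add, Real.sin_add] <;> ring

theorem rotM_zero : rotM 0 = 1 := by
  simp [rotM, one_fin_two]

noncomputable def rotAddChar : AddChar ℝ (Matrix (Fin 2) (Fin 2) ℝ) where
  toFun := rotM
  map_zero_eq_one' := rotM_zero
  map_add_eq_mul' := rotM_add

noncomputable def scaleAddChar : AddChar ℝ (Matrix (Fin 2) (Fin 2) ℝ) where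
  toFun u := diagM (Real.exp u) (Real.exp (-u))
  map_zero_eq_one' := by simp [diagM_one_one]
  map_add_eq_mul' a b := by rw [diagM_mul_diagM, ← Real.exp_add, ← Real.exp_add, neg_add]

def rotGens : Set (Matrix (Fin 2) (Fin 2) ℝ) := rotM '' Set.Icc 0 (Real.pi / 4)

def rightGens : Set (Matrix (Fin 2) (Fin 2) ℝ) :=
  {diagM (-1) 1, shearM, -1} ∪ (fun a => diagM a a⁻¹) '' Set.Icc (2 / 3) (3 / 2)

theorem rotM_mem_closure_rotGens (θ : ℝ) : rotM θ ∈ Submonoid.closure rotGens := by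
  obtain ⟨k, hk⟩ := exists_nat_gt (-θ / (2 * Real.pi))
  have hθ : 0 ≤ θ + k * (2 * Real.pi) := by
    rw [div_lt_iff₀ (by positivity)] at hk
    linarith
  have hrot : rotM θ = rotM (θ + k * (2 * Real.pi)) := by
    rw [rotM, rotM, Real.cos_add_nat_mul_two_pi, Real.sin_add_nat_mul_two_pi]
  rw [hrot]
  exact rotAddChar.apply_mem_closure_image_Icc_zero (by positivity) hθ

theorem diagM_inv_mem_closure_rightGens {t : ℝ} (ht : 0 < t) :
    diagM t t⁻¹ ∈ Submonoid.closure rightGens := by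
  have hgens : scaleAddChar '' Set.Icc (-Real.log (3 / 2)) (Real.log (3 / 2)) ⊆ rightGens := by
    rintro _ ⟨u, ⟨hu₁, hu₂⟩, rfl⟩
    refine Or.inr ⟨Real.exp u, ⟨?_, ?_⟩, by simp [scaleAddChar, Real.exp_neg]⟩
    · calc (2 / 3 : ℝ) = Real.exp (-Real.log (3 / 2)) := by
            rw [Real.exp_neg, Real.exp_log (by norm_num)]; norm_num
        _ ≤ Real.exp u := Real.exp_le_exp.mpr hu₁
    · calc Real.exp u ≤ Real.exp (Real.log (3 / 2)) := Real.exp_le_exp.mpr hu₂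
        _ = 3 / 2 := Real.exp_log (by norm_num)
  have hscale : diagM t t⁻¹ = scaleAddChar (Real.log t) := by
    simp [scaleAddChar, Real.exp_neg, Real.exp_log ht]
  rw [hscale]
  exact Submonoid.closure_mono hgens
    (scaleAddChar.apply_mem_closure_image_Icc_neg (Real.log_pos (by norm_num)) _)

theorem diagM_mem_closure_rightGens_of_abs_eq_one {e₁ e₂ : ℝ} (h₁ : |e₁| = 1)
    (h₂ : |e₂| = 1) :
    diagM e₁ e₂ ∈ Submonoid.closure rightGens := by
  have hmirror : diagM (-1) 1 ∈ Submonoid.closure rightGens :=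
    Submonoid.subset_closure (by simp [rightGens])
  have hneg : (-1 : Matrix (Fin 2) (Fin 2) ℝ) ∈ Submonoid.closure rightGens :=
    Submonoid.subset_closure (by simp [rightGens])
  have hneg' : (-1 : Matrix (Fin 2) (Fin 2) ℝ) = diagM (-1) (-1) := by
    simp [diagM, one_fin_two]
  rcases (abs_eq zero_le_one).mp h₁ with rfl | rfl <;>
    rcases (abs_eq zero_le_one).mp h₂ with rfl | rfl
  · exact diagM_one_one ▸ one_mem _
  · have : diagM 1 (-1) = diagM (-1) 1 * -1 := by rw [hneg', diagM_mul_diagM]; norm_num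
    exact this ▸ mul_mem hmirror hneg
  · exact hmirror
  · exact hneg' ▸ hneg

theorem shear_mem_closure_rightGens (u : ℝ) :
    !![1, u; 0, 1] ∈ Submonoid.closure rightGens := by
  have hshear : shearM ∈ Submonoid.closure rightGens :=
    Submonoid.subset_closure (by simp [rightGens])
  have hnonneg : ∀ v : ℝ, 0 ≤ v → !![1, v; 0, 1] ∈ Submonoid.closure rightGens := by
    intro v hv
    obtain ⟨a, ha, rfl⟩ : ∃ a, 0 ≤ a ∧ a ^ 2 = v :=
      ⟨√v, Real.sqrt_nonneg v, Real.sq_sqrt hv⟩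
    rcases ha.eq_or_lt with rfl | ha
    · simpa [one_fin_two] using one_mem (Submonoid.closure rightGens)
    have hconj : !![1, a ^ 2; 0, 1] = diagM a a⁻¹ * shearM * diagM a⁻¹ a⁻¹⁻¹ := by
      ext i j; fin_cases i <;> fin_cases j <;> simp [diagM, shearM] <;> field_simp
    rw [hconj]
    exact mul_mem (mul_mem (diagM_inv_mem_closure_rightGens ha) hshear)
      (diagM_inv_mem_closure_rightGens (inv_pos.mpr ha))
  rcases le_or_gt 0 u with hu | hu
  · exact hnonneg u hu
  · have hconj : !![1, u; 0, 1] = diagM (-1) 1 * !![1, -u; 0, 1] * diagM (-1) 1 := by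
      simp [diagM]
    have hmirror : diagM (-1) 1 ∈ Submonoid.closure rightGens :=
      diagM_mem_closure_rightGens_of_abs_eq_one (by simp) (by simp)
    rw [hconj]
    exact mul_mem (mul_mem hmirror (hnonneg _ (by linarith))) hmirror

theorem upper_mem_closure_rightGens {p s q : ℝ} (h : |p * q| = 1) :
    !![p, s; 0, q] ∈ Submonoid.closure rightGens := by
  have hp : p ≠ 0 := by rintro rfl; simp at h
  have hp' : 0 < |p| := abs_pos.mpr hp
  have hdecomp : !![p, s; 0, q] =
      diagM (p / |p|) (q * |p|) * diagM |p| |p|⁻¹ * !![1, s / p; 0, 1] := by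
    ext i j; fin_cases i <;> fin_cases j <;> simp [diagM] <;> field_simp
  have h₁ : abs (p / |p|) = 1 := by rw [abs_div, abs_abs, div_self hp'.ne']
  have h₂ : abs (q * |p|) = 1 := by rw [abs_mul, abs_abs, mul_comm, ← abs_mul, h]
  rw [hdecomp]
  exact mul_mem (mul_mem (diagM_mem_closure_rightGens_of_abs_eq_one h₁ h₂)
    (diagM_inv_mem_closure_rightGens hp')) (shear_mem_closure_rightGens _)

theorem mem_closure_rightGens_of_isUpperTriangular {U : Matrix (Fin 2) (Fin 2) ℝ}
    (hU : U.IsUpperTriangular) (hdet : |U.det| = 1) : U ∈ Submonoid.closure rightGens := by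
  have h10 : U 1 0 = 0 := hU (by decide)
  rw [eta_fin_two U, h10] at hdet ⊢
  rw [det_fin_two_of, mul_zero, sub_zero] at hdet
  exact upper_mem_closure_rightGens hdet

theorem exists_isUpperTriangular_rotM_mul (X : Matrix (Fin 2) (Fin 2) ℝ) :
    ∃ θ, (rotM θ * X).IsUpperTriangular := by
  let z : ℂ := ⟨X 0 0, X 1 0⟩
  have h₀ : ‖z‖ * Real.cos z.arg = X 0 0 := Complex.norm_mul_cos_arg z
  have h₁ : ‖z‖ * Real.sin z.arg = X 1 0 := Complex.norm_mul_sin_arg z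
  refine ⟨-z.arg, fun i j hij => ?_⟩
  obtain ⟨rfl, rfl⟩ : i = 1 ∧ j = 0 := by revert i j; decide
  simp only [rotM, Real.cos_neg, Real.sin_neg, mul_apply, of_apply, cons_val', cons_val_fin_one,
    cons_val_one, Fin.sum_univ_two, cons_val_zero, neg_mul]
  linear_combination Real.sin z.arg * h₀ - Real.cos z.arg * h₁

local notation "𝒳" => {A : Matrix (Fin 2) (Fin 2) ℝ // Matrix.det A ≠ 0}

theorem reflTransGen_mulStep_of_abs_det_eq {x y : 𝒳}
    (h : |x.val.det| = |y.val.det|) : ReflTransGen (MulStep rotGens rightGens) x y := by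
  obtain ⟨φ, hU⟩ := exists_isUpperTriangular_rotM_mul x.val
  obtain ⟨ψ, hV⟩ := exists_isUpperTriangular_rotM_mul y.val
  set U := rotM φ * x.val
  set V := rotM ψ * y.val
  have hUdet : U.det = x.val.det := by simp [U, det_rotM]
  have hVdet : V.det = y.val.det := by simp [V, det_rotM]
  have hU₀ : IsUnit U.det := (hUdet ▸ x.2).isUnit
  let := invertibleOfIsUnitDet U hU₀
  have hW : (U⁻¹ * V).IsUpperTriangular := (blockTriangular_inv_of_blockTriangular hU).mul hV
  have hWdet : |(U⁻¹ * V).det| = 1 := by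
    rw [det_mul, det_nonsing_inv, Ring.inverse_eq_inv', abs_mul, abs_inv, hUdet, hVdet, h,
      inv_mul_cancel₀ (abs_ne_zero.mpr y.2)]
  refine reflTransGen_mulStep_of_mem_closure (rotM_mem_closure_rotGens (-ψ + φ))
    (mem_closure_rightGens_of_isUpperTriangular hW hWdet) ?_
  calc y.val = rotM (-ψ) * V := by
        rw [← mul_assoc, ← rotM_add, neg_add_cancel, rotM_zero, one_mul]
    _ = rotM (-ψ) * (U * U⁻¹ * V) := by rw [mul_nonsing_inv U hU₀, one_mul]
    _ = rotM (-ψ + φ) * x.val * (U⁻¹ * V) := by simp only [U, rotM_add, mul_assoc]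

def essentialMaps : Set (𝒳 → 𝒳) :=
  {T | (∃ θ ∈ Set.Icc (0 : ℝ) (Real.pi / 4), ∀ A, (T A).val = rotM θ * A.val) ∨
    (∃ a ∈ Set.Icc (2 / 3 : ℝ) (3 / 2 : ℝ), ∀ A, (T A).val = A.val * diagM a a⁻¹) ∨
    (∀ A, (T A).val = A.val * diagM (-1) 1) ∨
    (∀ A, (T A).val = A.val * shearM) ∨
    (∀ A, (T A).val = A.val * (-(1 : Matrix (Fin 2) (Fin 2) ℝ)))}

theorem abs_det_apply_of_mem_essentialMaps {T : 𝒳 → 𝒳} (hT : T ∈ essentialMaps)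
    (A : 𝒳) : |(T A).val.det| = |A.val.det| := by
  rcases hT with ⟨θ, -, hT⟩ | ⟨a, ha, hT⟩ | hT | hT | hT
  · simp [hT, det_rotM]
  · simp [hT, det_diagM, (show a ≠ 0 by linarith [ha.1])]
  · simp [hT, det_diagM]
  · simp [hT, det_shearM]
  · simp [hT, det_neg]

theorem exists_mem_essentialMaps_of_mulStep {x y : 𝒳}
    (h : MulStep rotGens rightGens x y) : ∃ T ∈ essentialMaps, T x = y := by
  rcases h with ⟨_, ⟨θ, hθ, rfl⟩, h⟩ | ⟨M, hM, h⟩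
  · exact ⟨fun A => ⟨rotM θ * A.val, by simpa [det_rotM] using A.2⟩,
      .inl ⟨θ, hθ, fun _ => rfl⟩, Subtype.ext h.symm⟩
  have hM₀ : M.det ≠ 0 := by
    rcases hM with (rfl | rfl | rfl) | ⟨a, ha, rfl⟩
    · simp [det_diagM]
    · simp [det_shearM]
    · simp [det_neg]
    · simp [det_diagM, (show a ≠ 0 by linarith [ha.1])]
  refine ⟨fun A => ⟨A.val * M, by rw [det_mul]; exact mul_ne_zero A.2 hM₀⟩, ?_,
    Subtype.ext h.symm⟩
  rcases hM with (rfl | rfl | rfl) | ⟨a, ha, rfl⟩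
  · exact .inr (.inr (.inl fun _ => rfl))
  · exact .inr (.inr (.inr (.inl fun _ => rfl)))
  · exact .inr (.inr (.inr (.inr fun _ => rfl)))
  · exact .inr (.inl ⟨a, ha, fun _ => rfl⟩)

/-- Example: on the set `𝒳` of invertible `2 × 2` real matrices with
`g X = |det X| / 2` (the area of the triangle formed by the columns of `X` and the
origin), the family consisting of the rotations `X ↦ R_θ X` for `θ ∈ [0, π/4]`, the
scalings `X ↦ X ⬝ diag(a, a⁻¹)` for `a ∈ [2/3, 3/2]`, the mirror `X ↦ X ⬝ diag(-1, 1)`,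
the shear `X ↦ X ⬝ S`, and the point reflection `X ↦ X ⬝ (-I₂)` is a causal essential
set for `g`: each transformation preserves `|det|` (hence `g`, and maps `𝒳` to `𝒳`),
and any two invertible matrices with equal `|det|` are connected by finitely many of
these transformations. -/
theorem stmt_13 :
    IsCausalEssentialSet
      (fun A : {A : Matrix (Fin 2) (Fin 2) ℝ // A.det ≠ 0} => |A.val.det| / 2)
      {T : {A : Matrix (Fin 2) (Fin 2) ℝ // A.det ≠ 0} →
           {A : Matrix (Fin 2) (Fin 2) ℝ // A.det ≠ 0} |
        (∃ θ ∈ Set.Icc (0 : ℝ) (Real.pi / 4), ∀ A, (T A).val = rotM θ * A.val) ∨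
        (∃ a ∈ Set.Icc (2 / 3 : ℝ) (3 / 2 : ℝ), ∀ A, (T A).val = A.val * diagM a a⁻¹) ∨
        (∀ A, (T A).val = A.val * diagM (-1) 1) ∨
        (∀ A, (T A).val = A.val * shearM) ∨
        (∀ A, (T A).val = A.val * (-(1 : Matrix (Fin 2) (Fin 2) ℝ)))} := by
  refine ⟨fun T hT => funext fun A => ?_, fun x y h => ?_⟩
  · simp [abs_det_apply_of_mem_essentialMaps hT A]
  · have hdet : |x.val.det| = |y.val.det| := by simpa using h
    exact exists_list_of_reflTransGen <| ReflTransGen.mono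
      (fun _ _ => exists_mem_essentialMaps_of_mulStep) x y
      (reflTransGen_mulStep_of_abs_det_eq hdet)
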